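/- Let c₁, …, c_n and K be positive integers with max{c_i : i ∈ [n]} < K < c₁ + … + c_n. Let T be a star with center vertex x and leaves y₁, …, y_{n+1}, and let w : V(T) → ℕ be given by w(x) = 1, w(y_i) = c_i for i ∈ [n], and w(y_{n+1}) = K + 1. Then K + 1 ≤ cs(T,w) ≤ K + 2. -/

import Mathlib

/-- Total weight of a set of vertices. -/
noncomputable def setWeight {V : Type*} (w : V → ℕ) (A : Set V) : ℕ := ∑ᶠ u ∈ A, w u

/-- `C` is the vertex set of a connected component of the subgraph of `G` induced by `S`. -/
def IsCompOf {V : Type*} (G : SimpleGraph V) (S C : Set V) : Prop :=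
  C ⊆ S ∧ (G.induce C).Connected ∧ ∀ u ∈ C, ∀ v ∈ S, G.Adj u v → v ∈ C

/-- `S` is a (nonempty) `w`-safe set of `G`. -/
def IsSafeSet {V : Type*} (G : SimpleGraph V) (w : V → ℕ) (S : Set V) : Prop :=
  S.Nonempty ∧ ∀ C D : Set V, IsCompOf G S C → IsCompOf G Sᶜ D →
    (∃ u ∈ C, ∃ v ∈ D, G.Adj u v) → setWeight w D ≤ setWeight w C

/-- The star with center `none` and leaves `some i` for `i : Fin m`. -/
def starGraph (m : ℕ) : SimpleGraph (Option (Fin m)) where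
  Adj a b := (a = none ∧ b ≠ none) ∨ (b = none ∧ a ≠ none)
  symm := ⟨by intro a b h; tauto⟩
  loopless := ⟨by rintro a (⟨h1, h2⟩ | ⟨h1, h2⟩) <;> exact h2 h1⟩

/-- The weight function on the star: the center gets weight `1`, the first `n` leaves get
weights `c 0, …, c (n-1)`, and the last leaf gets weight `K + 1`. -/
def starW (n : ℕ) (c : Fin n → ℕ) (K : ℕ) : Option (Fin (n + 1)) → ℕ
  | none => 1
  | some i => if h : (i : ℕ) < n then c ⟨i, h⟩ else K + 1

/-- The connected safe number `cs(G,w)`. -/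
noncomputable def connSafeNum {V : Type*} (G : SimpleGraph V) (w : V → ℕ) : ℕ :=
  sInf {m | ∃ S : Set V, IsSafeSet G w S ∧ (G.induce S).Connected ∧ setWeight w S = m}

/-! A connected safe set of the star either contains the heavy leaf `y_{n+1}`, or contains the
center and then must outweigh the component `{y_{n+1}}` of its complement, or is a single
lighter leaf, which the rest of the star (containing `y_{n+1}`) outweighs; so it weighs at least
`K + 1`. Conversely `{x, y_{n+1}}` is safe, because each remaining component is one leaf of
weight `c_i < K`. -/

section General

variable {V : Type*} {G : SimpleGraph V} {w : V → ℕ} {S C D : Set V}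

theorem setWeight_singleton (w : V → ℕ) (a : V) : setWeight w {a} = w a :=
  finsum_mem_singleton

theorem setWeight_pair (w : V → ℕ) {a b : V} (hab : a ≠ b) :
    setWeight w {a, b} = w a + w b :=
  finsum_mem_pair hab

theorem le_setWeight_of_mem [Finite V] (w : V → ℕ) {a : V} (ha : a ∈ S) :
    w a ≤ setWeight w S := by
  rw [setWeight, ← (Set.toFinite S).coe_toFinset, finsum_mem_coe_finset]
  exact Finset.single_le_sum (fun _ _ => Nat.zero_le _) ((Set.toFinite S).mem_toFinset.2 ha)

theorem induce_singleton_connected (G : SimpleGraph V) (a : V) :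
    (G.induce {a}).Connected := by
  refine (SimpleGraph.connected_iff _).2 ⟨fun u v => ?_, ⟨⟨a, rfl⟩⟩⟩
  rw [Subtype.ext (u.2.trans v.2.symm)]

theorem isCompOf_self (hS : (G.induce S).Connected) : IsCompOf G S S :=
  ⟨subset_rfl, hS, fun _ _ _ hv _ => hv⟩

theorem IsCompOf.eq_of_connected (hS : (G.induce S).Connected) (hC : IsCompOf G S C) :
    C = S := by
  obtain ⟨hCS, hCconn, hclosed⟩ := hC
  obtain ⟨⟨c, hc⟩⟩ := hCconn.nonempty
  have walk_mem : ∀ {u v : S}, (G.induce S).Walk u v → u.1 ∈ C → v.1 ∈ C := by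
    intro u v p
    induction p with
    | nil => exact id
    | cons hadj _ ih => exact fun hu => ih (hclosed _ hu _ (Subtype.property _) hadj)
  refine hCS.antisymm fun s hs => ?_
  obtain ⟨p⟩ := hS.preconnected ⟨c, hCS hc⟩ ⟨s, hs⟩
  exact walk_mem p hc

theorem IsSafeSet.setWeight_le (hsafe : IsSafeSet G w S) (hS : (G.induce S).Connected)
    (hD : IsCompOf G Sᶜ D) {u v : V} (hu : u ∈ S) (hv : v ∈ D) (huv : G.Adj u v) :
    setWeight w D ≤ setWeight w S :=
  hsafe.2 S D (isCompOf_self hS) hD ⟨u, hu, v, hv, huv⟩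

theorem connSafeNum_le (hsafe : IsSafeSet G w S) (hS : (G.induce S).Connected) :
    connSafeNum G w ≤ setWeight w S :=
  Nat.sInf_le ⟨S, hsafe, hS, rfl⟩

theorem le_connSafeNum {b : ℕ} (hne : ∃ S, IsSafeSet G w S ∧ (G.induce S).Connected)
    (hle : ∀ S, IsSafeSet G w S → (G.induce S).Connected → b ≤ setWeight w S) :
    b ≤ connSafeNum G w := by
  obtain ⟨S, hsafe, hS⟩ := hne
  refine le_csInf ⟨_, S, hsafe, hS, rfl⟩ ?_
  rintro _ ⟨T, hsafe', hT, rfl⟩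
  exact hle T hsafe' hT

end General

section Star

variable {m : ℕ} {S : Set (Option (Fin m))}

theorem starGraph_adj_none (i : Fin m) : (starGraph m).Adj none (some i) :=
  Or.inl ⟨rfl, Option.some_ne_none i⟩

theorem starGraph_induce_connected_of_none_mem (h : none ∈ S) :
    ((starGraph m).induce S).Connected := by
  have to_center : ∀ a : S, ((starGraph m).induce S).Reachable a ⟨none, h⟩ := by
    rintro ⟨a, ha⟩
    cases a with
    | none => exact SimpleGraph.Reachable.refl _
    | some i => exact SimpleGraph.Adj.reachable (starGraph_adj_none i).symm
  exact (SimpleGraph.connected_iff _).2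
    ⟨fun a b => (to_center a).trans (to_center b).symm, ⟨⟨none, h⟩⟩⟩

/-- Without the center the leaves are pairwise nonadjacent. -/
theorem starGraph_eq_singleton_of_connected (hS : ((starGraph m).induce S).Connected)
    (h : none ∉ S) : ∃ i, S = {some i} := by
  have hbot : (starGraph m).induce S = ⊥ := by
    ext u v
    simp only [SimpleGraph.bot_adj, iff_false]
    rintro (⟨hu, -⟩ | ⟨hv, -⟩)
    · exact h (hu ▸ u.2)
    · exact h (hv ▸ v.2)
  obtain ⟨⟨a, ha⟩⟩ := hS.nonempty
  obtain ⟨i, rfl⟩ := Option.ne_none_iff_exists'.1 fun hn => h (hn ▸ ha)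
  refine ⟨i, Set.eq_singleton_iff_unique_mem.2 ⟨ha, fun b hb => ?_⟩⟩
  have hr := hS.preconnected ⟨b, hb⟩ ⟨some i, ha⟩
  rw [hbot, SimpleGraph.reachable_bot] at hr
  exact congrArg Subtype.val hr

theorem starGraph_isCompOf_leaf (hnone : none ∈ S) {i : Fin m} (hi : some i ∉ S) :
    IsCompOf (starGraph m) Sᶜ {some i} := by
  refine ⟨Set.singleton_subset_iff.2 hi, induce_singleton_connected _ _, ?_⟩
  rintro u rfl v hv (⟨hu, -⟩ | ⟨rfl, -⟩)
  · exact absurd hu (Option.some_ne_none i)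
  · exact absurd hnone hv

variable (w : Option (Fin m) → ℕ) (ℓ : Fin m)

/-- Every component of the complement of `{center, ℓ}` is a single other leaf. -/
theorem starGraph_isSafeSet_pair (hleaf : ∀ i, i ≠ ℓ → w (some i) ≤ w none + w (some ℓ)) :
    IsSafeSet (starGraph m) w {none, some ℓ} := by
  have hconn := starGraph_induce_connected_of_none_mem (S := {none, some ℓ}) (Or.inl rfl)
  refine ⟨⟨none, Or.inl rfl⟩, ?_⟩
  rintro C D hC hD -
  obtain rfl := hC.eq_of_connected hconn
  obtain ⟨i, rfl⟩ := starGraph_eq_singleton_of_connected hD.2.1 fun h => hD.1 h (Or.inl rfl)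
  have hi : i ≠ ℓ := fun h => hD.1 rfl (Or.inr (congrArg some h))
  rw [setWeight_singleton, setWeight_pair _ (Option.some_ne_none ℓ).symm]
  exact hleaf i hi

theorem connSafeNum_starGraph_le (hleaf : ∀ i, i ≠ ℓ → w (some i) ≤ w none + w (some ℓ)) :
    connSafeNum (starGraph m) w ≤ w none + w (some ℓ) := by
  have h := connSafeNum_le (starGraph_isSafeSet_pair w ℓ hleaf)
    (starGraph_induce_connected_of_none_mem (Or.inl rfl))
  rwa [setWeight_pair _ (Option.some_ne_none ℓ).symm] at h

theorem le_setWeight_of_isSafeSet_starGraph (hleaf : ∀ i, i ≠ ℓ → w (some i) < w (some ℓ))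
    (hsafe : IsSafeSet (starGraph m) w S) (hS : ((starGraph m).induce S).Connected) :
    w (some ℓ) ≤ setWeight w S := by
  by_cases hℓ : some ℓ ∈ S
  · exact le_setWeight_of_mem w hℓ
  by_cases hnone : none ∈ S
  · have h := hsafe.setWeight_le hS (starGraph_isCompOf_leaf hnone hℓ) hnone rfl
      (starGraph_adj_none ℓ)
    rwa [setWeight_singleton] at h
  obtain ⟨i, rfl⟩ := starGraph_eq_singleton_of_connected hS hnone
  have hi : i ≠ ℓ := fun h => hℓ (congrArg some h ▸ rfl)
  have hrest := hsafe.setWeight_le hS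
    (isCompOf_self (starGraph_induce_connected_of_none_mem (Option.some_ne_none i).symm))
    rfl (Option.some_ne_none i).symm (starGraph_adj_none i).symm
  have hℓrest := le_setWeight_of_mem w (S := {some i}ᶜ) fun h => hi (Option.some_injective _ h).symm
  rw [setWeight_singleton] at hrest ⊢
  exact absurd (hℓrest.trans hrest) (hleaf i hi).not_ge

theorem le_connSafeNum_starGraph (hleaf : ∀ i, i ≠ ℓ → w (some i) < w (some ℓ)) :
    w (some ℓ) ≤ connSafeNum (starGraph m) w :=
  le_connSafeNum
    ⟨_, starGraph_isSafeSet_pair w ℓ fun i hi => (hleaf i hi).le.trans (Nat.le_add_left _ _),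
      starGraph_induce_connected_of_none_mem (Or.inl rfl)⟩
    fun _ => le_setWeight_of_isSafeSet_starGraph w ℓ hleaf

end Star

theorem starW_some_lt_of_ne_last {n : ℕ} {c : Fin n → ℕ} {K : ℕ} (hmax : ∀ i, c i < K)
    {i : Fin (n + 1)} (hi : i ≠ Fin.last n) : starW n c K (some i) < K := by
  have hin : (i : ℕ) < n := Fin.val_lt_last hi
  simpa [starW, hin] using hmax ⟨i, hin⟩

theorem starW_some_last (n : ℕ) (c : Fin n → ℕ) (K : ℕ) :
    starW n c K (some (Fin.last n)) = K + 1 := by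
  simp [starW]

theorem connSafeNum_star_bounds_general (n : ℕ) (c : Fin n → ℕ) (K : ℕ)
    (hmax : ∀ i, c i < K) :
    K + 1 ≤ connSafeNum (starGraph (n + 1)) (starW n c K) ∧
      connSafeNum (starGraph (n + 1)) (starW n c K) ≤ K + 2 := by
  have hlight : ∀ i, i ≠ Fin.last n → starW n c K (some i) < starW n c K (some (Fin.last n)) :=
    fun i hi => by
      rw [starW_some_last]
      exact (starW_some_lt_of_ne_last hmax hi).trans K.lt_succ_self
  have hlower := le_connSafeNum_starGraph (starW n c K) (Fin.last n) hlight
  have hupper := connSafeNum_starGraph_le (starW n c K) (Fin.last n)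
    fun i hi => (hlight i hi).le.trans (Nat.le_add_left _ _)
  rw [starW_some_last] at hlower hupper
  exact ⟨hlower, by simp only [starW] at hupper; omega⟩

theorem connSafeNum_star_bounds (n : ℕ) (c : Fin n → ℕ) (K : ℕ)
    (hc : ∀ i, 0 < c i) (hK : 0 < K) (hmax : ∀ i, c i < K) (hsum : K < ∑ i, c i) :
    K + 1 ≤ connSafeNum (starGraph (n + 1)) (starW n c K) ∧
      connSafeNum (starGraph (n + 1)) (starW n c K) ≤ K + 2 :=
  connSafeNum_star_bounds_general n c K hmax
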